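/- arXiv:2602.00835 — 2 statements merged into one kernel-verified Lean document; each statement's English description precedes it below -/
import Mathlib

section
/- Let X be a nonempty type and let a : X × X → ℝ take values in (0, 1]. Suppose there exist functions h₁, h₂ : X → ℝ such that a(x', x) / a(x, x') = exp(h₁(x)) · exp(h₂(x')) for all x, x' ∈ X. Then, defining f(x) = exp(h₁(x)/2), g(x) = exp(h₂(x)/2), and r(x', x) = √(a(x', x) · a(x, x')), one has: (1) f and g are everywhere positive, (2) r is symmetric, i.e. r(x', x) = r(x, x') for all x, x', and (3) a(x', x) = f(x) · g(x') · r(x', x) for all x, x' ∈ X. -/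
/-- **Multiplicative decomposition of an acceptance function (existence direction).**
If an acceptance function `a` with values in `(0, 1]` satisfies
`a (x', x) / a (x, x') = exp (h₁ x) * exp (h₂ x')`, then with
`f x = exp (h₁ x / 2)`, `g x = exp (h₂ x / 2)` and `r (x', x) = √(a (x', x) * a (x, x'))`,
the functions `f, g` are positive, `r` is symmetric, and `a (x', x) = f x * g x' * r (x', x)`. -/
theorem acceptance_decomposition_of_ratio
    {X : Type*} [Nonempty X] (a : X × X → ℝ)
    (ha : ∀ z, a z ∈ Set.Ioc (0 : ℝ) 1)
    (h₁ h₂ : X → ℝ)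
    (hratio : ∀ x x' : X,
      a (x', x) / a (x, x') = Real.exp (h₁ x) * Real.exp (h₂ x')) :
    (∀ x, 0 < Real.exp (h₁ x / 2)) ∧
    (∀ x, 0 < Real.exp (h₂ x / 2)) ∧
    (∀ x x' : X, Real.sqrt (a (x', x) * a (x, x')) = Real.sqrt (a (x, x') * a (x', x))) ∧
    (∀ x x' : X,
      a (x', x) = Real.exp (h₁ x / 2) * Real.exp (h₂ x' / 2)
        * Real.sqrt (a (x', x) * a (x, x'))) := by
  refine ⟨fun x => Real.exp_pos _, fun x => Real.exp_pos _,
    fun x x' => by rw [mul_comm], fun x x' => ?_⟩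
  have hp := (ha (x', x)).1
  have hq := (ha (x, x')).1
  have hE := hratio x x'
  have hpq : a (x', x) = (Real.exp (h₁ x) * Real.exp (h₂ x')) * a (x, x') := by
    field_simp at hE; linarith
  have key : a (x', x) ^ 2
      = (Real.exp (h₁ x) * Real.exp (h₂ x')) * (a (x', x) * a (x, x')) := by
    nlinarith [hpq]
  calc a (x', x) = Real.sqrt (a (x', x) ^ 2) := (Real.sqrt_sq hp.le).symm
    _ = Real.sqrt ((Real.exp (h₁ x) * Real.exp (h₂ x')) * (a (x', x) * a (x, x'))) := by
        rw [key]
    _ = Real.sqrt (Real.exp (h₁ x)) * Real.sqrt (Real.exp (h₂ x'))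
          * Real.sqrt (a (x', x) * a (x, x')) := by
        rw [Real.sqrt_mul (by positivity), Real.sqrt_mul (Real.exp_pos _).le]
    _ = Real.exp (h₁ x / 2) * Real.exp (h₂ x' / 2)
          * Real.sqrt (a (x', x) * a (x, x')) := by
        rw [Real.exp_half, Real.exp_half]
end

section
/- Let S be a countable type, let p : S → ℝ≥0 be a probability mass function, let q : S × S → ℝ≥0 be a proposal kernel with ∑_{y} q(y, x) = 1 for every x (q(y, x) is the probability of proposing y from x), and let a : S × S → ℝ be an acceptance function with values in [0, 1] satisfying the detailed balance condition p(x) · ((q(y, x) : ℝ) · a(y, x)) = p(y) · ((q(x, y) : ℝ) · a(x, y)) for all x, y ∈ S. Define the Metropolis–Hastings transition kernel P(x, y) = q(y, x) · a(y, x) for y ≠ x and P(x, x) = 1 − ∑_{y ≠ x} q(y, x) · a(y, x). Then P is a transition matrix (each row sums to 1 and has nonnegative entries) and p is stationary for P: ∑_{x ∈ S} p(x) · P(x, y) = p(y) for every y ∈ S. -/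
open scoped NNReal

/-- **The Metropolis–Hastings kernel is a transition matrix leaving the target invariant.**
Given a pmf `p`, a proposal kernel `q` (with `q (y, x)` the probability of proposing `y`
from `x`, rows summing to one) and an acceptance function `a` with values in `[0, 1]`
satisfying detailed balance `p x * (q (y, x) * a (y, x)) = p y * (q (x, y) * a (x, y))`,
the Metropolis–Hastings kernel `P x y = q (y, x) * a (y, x)` for `y ≠ x` and
`P x x = 1 - ∑'_{y ≠ x} q (y, x) * a (y, x)` has rows summing to one with nonnegative
entries, and `p` is stationary for `P`. -/
theorem metropolis_hastings_kernel_stationary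
    {S : Type*} [Countable S] (p : S → ℝ≥0) (q : S × S → ℝ≥0) (a : S × S → ℝ)
    (hp : ∑' x, p x = 1)
    (hq : ∀ x, ∑' y, q (y, x) = 1)
    (ha : ∀ z, a z ∈ Set.Icc (0 : ℝ) 1)
    (hdb : ∀ x y : S,
      (p x : ℝ) * ((q (y, x) : ℝ) * a (y, x)) = (p y : ℝ) * ((q (x, y) : ℝ) * a (x, y)))
    (P : S → S → ℝ)
    (hPoff : ∀ x y : S, y ≠ x → P x y = (q (y, x) : ℝ) * a (y, x))
    (hPdiag : ∀ x : S,
      P x x = 1 - ∑' y : {y : S // y ≠ x}, (q ((y : S), x) : ℝ) * a ((y : S), x)) :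
    (∀ x, ∑' y, P x y = 1) ∧ (∀ x y, 0 ≤ P x y) ∧
      (∀ y, ∑' x, (p x : ℝ) * P x y = (p y : ℝ)) := by
  classical
  set f : S → S → ℝ := fun x y => (q (y, x) : ℝ) * a (y, x) with hf
  have hq_sumN : ∀ x, Summable (fun y => q (y, x)) := by
    intro x
    by_contra h
    simpa [tsum_eq_zero_of_not_summable h] using hq x
  have hq_sum : ∀ x, Summable (fun y => (q (y, x) : ℝ)) := fun x =>
    NNReal.summable_coe.2 (hq_sumN x)
  have hp_sumN : Summable p := by
    by_contra h
    simpa [tsum_eq_zero_of_not_summable h] using hp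
  have hp_sum : Summable (fun x => (p x : ℝ)) := NNReal.summable_coe.2 hp_sumN
  have hf0 : ∀ x y, 0 ≤ f x y := fun x y => mul_nonneg (q _).coe_nonneg (ha _).1
  have hfle : ∀ x y, f x y ≤ (q (y, x) : ℝ) := fun x y =>
    mul_le_of_le_one_right (q _).coe_nonneg (ha _).2
  have hf_sum : ∀ x, Summable (f x) := fun x =>
    Summable.of_nonneg_of_le (hf0 x) (hfle x) (hq_sum x)
  have hqtsum : ∀ x, ∑' y, (q (y, x) : ℝ) = 1 := by
    intro x
    rw [← NNReal.coe_tsum, hq x, NNReal.coe_one]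
  have hq_le_one : ∀ x y, (q (y, x) : ℝ) ≤ 1 := by
    intro x y
    calc (q (y, x) : ℝ) ≤ ∑' z, (q (z, x) : ℝ) :=
          Summable.le_tsum (hq_sum x) y (fun _ _ => (q _).coe_nonneg)
      _ = 1 := hqtsum x
  -- splitting a sum at one point
  have hsplit : ∀ (g : S → ℝ), Summable g → ∀ x : S,
      ∑' y, g y = g x + ∑' y : {y : S // y ≠ x}, g (y : S) := by
    intro g hg x
    have e : {y : S // y ≠ x} ≃ (({x}ᶜ : Set S) : Type _) :=
      Equiv.subtypeEquivRight (by simp)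
    have h1 : ∑' y : {y : S // y ≠ x}, g (y : S)
        = ∑' y : (({x}ᶜ : Set S) : Type _), g (y : S) := by
      exact e.tsum_eq (fun y => g (y : S)) |>.symm ▸ rfl
    have h2 := Summable.tsum_add_tsum_compl (f := g) (s := ({x} : Set S))
      (hg.subtype _) (hg.subtype _)
    rw [tsum_singleton] at h2
    rw [h1, ← h2]
  set D : S → ℝ := fun x => ∑' y : {y : S // y ≠ x}, f x (y : S) with hD
  have hD0 : ∀ x, 0 ≤ D x := fun x => tsum_nonneg (fun y => hf0 x y)
  have hDsplit : ∀ x, ∑' y, f x y = f x x + D x := fun x => hsplit (f x) (hf_sum x) x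
  have hftsum_le : ∀ x, ∑' y, f x y ≤ 1 := by
    intro x
    calc ∑' y, f x y ≤ ∑' y, (q (y, x) : ℝ) := Summable.tsum_le_tsum (hfle x) (hf_sum x) (hq_sum x)
      _ = 1 := hqtsum x
  have hD_le_one : ∀ x, D x ≤ 1 := by
    intro x
    have := hDsplit x
    nlinarith [hf0 x x, hftsum_le x]
  have hPdiag' : ∀ x, P x x = 1 - D x := hPdiag
  -- P x = update of f x at x
  have hPeq : ∀ x, P x = Function.update (f x) x (P x x) := by
    intro x
    funext y
    by_cases h : y = x
    · subst h; simp
    · rw [Function.update_of_ne h, hPoff x y h]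
  have hP_sum : ∀ x, Summable (P x) := by
    intro x
    rw [hPeq x]
    exact (hf_sum x).update x (P x x)
  have hP_nonneg : ∀ x y, 0 ≤ P x y := by
    intro x y
    by_cases h : y = x
    · subst h; rw [hPdiag' y]; linarith [hD_le_one y]
    · rw [hPoff x y h]; exact hf0 x y
  have hP_le_one : ∀ x y, P x y ≤ 1 := by
    intro x y
    by_cases h : y = x
    · subst h; rw [hPdiag' y]; linarith [hD0 y]
    · rw [hPoff x y h]
      exact le_trans (hfle x y) (hq_le_one x y)
  have hrow : ∀ x, ∑' y, P x y = 1 := by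
    intro x
    rw [hsplit (P x) (hP_sum x) x]
    have : ∑' y : {y : S // y ≠ x}, P x (y : S) = D x :=
      tsum_congr fun y => hPoff x y y.2
    rw [this, hPdiag' x]
    ring
  refine ⟨hrow, hP_nonneg, ?_⟩
  intro y
  have hg_sum : Summable (fun x => (p x : ℝ) * P x y) := by
    apply Summable.of_nonneg_of_le (fun x => mul_nonneg (p x).coe_nonneg (hP_nonneg x y))
      (fun x => mul_le_of_le_one_right (p x).coe_nonneg (hP_le_one x y)) hp_sum
  rw [hsplit _ hg_sum y]
  have h1 : ∑' x : {x : S // x ≠ y}, (p (x : S) : ℝ) * P (x : S) y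
      = (p y : ℝ) * D y := by
    have : ∀ x : {x : S // x ≠ y}, (p (x : S) : ℝ) * P (x : S) y
        = (p y : ℝ) * f y (x : S) := by
      intro x
      rw [hPoff (x : S) y (Ne.symm x.2)]
      exact hdb (x : S) y
    rw [tsum_congr this, tsum_mul_left]
  rw [h1, hPdiag' y]
  ring
end
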